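/- arXiv:2412.19481 — 3 statements merged into one kernel-verified Lean document; each statement's English description precedes it below -/
import Mathlib

section
/- Let G be a graph on n vertices with clique number ω and let 2 ≤ t ≤ ω. For every nonnegative vector x with Σ_i x_i^t = 1, we have t · Σ_{S ∈ C_t(G)} Π_{i∈S} x_i ≤ (t/ω) · C(ω,t)^{1/t} · |C_t(G)|^{(t-1)/t}. (Combinatorial core of the tensor spectral bound, via Hölder's inequality and the higher-order Motzkin–Straus theorem.) -/
open SimpleGraph Finset Real

section Aux

variable {n : ℕ}

/-- Sum of products over subsets of `insert x s` of given size splits. -/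
lemma aux_sum_insert (x : Fin n) (s : Finset (Fin n)) (hx : x ∉ s) (j : ℕ) (z : Fin n → ℝ) :
    ∑ S ∈ (insert x s).powersetCard (j+1), ∏ i ∈ S, z i
      = (∑ S ∈ s.powersetCard (j+1), ∏ i ∈ S, z i)
        + z x * ∑ S ∈ s.powersetCard j, ∏ i ∈ S, z i := by
  have hdisj : Disjoint (s.powersetCard (j+1)) ((s.powersetCard j).image (insert x)) := by
    rw [Finset.disjoint_left]
    intro S hS hS'
    obtain ⟨T, hT, rfl⟩ := Finset.mem_image.1 hS'
    have hsub := (Finset.mem_powersetCard.1 hS).1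
    exact hx (hsub (Finset.mem_insert_self x T))
  rw [Finset.powersetCard_succ_insert hx, Finset.sum_union hdisj]
  congr 1
  rw [Finset.sum_image, Finset.mul_sum]
  · refine Finset.sum_congr rfl fun S hS => ?_
    have hxS : x ∉ S := fun h => hx ((Finset.mem_powersetCard.1 hS).1 h)
    rw [Finset.prod_insert hxS]
  · intro S hS T hT hST
    have hxS : x ∉ S := fun h => hx ((Finset.mem_powersetCard.1 hS).1 h)
    have hxT : x ∉ T := fun h => hx ((Finset.mem_powersetCard.1 hT).1 h)
    rw [← Finset.erase_insert hxS, ← Finset.erase_insert hxT, hST]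

/-- Two-variable decomposition of the elementary-symmetric-type sum. -/
lemma aux_expand2 (K : Finset (Fin n)) (u v : Fin n) (hu : u ∈ K) (hv : v ∈ K)
    (huv : u ≠ v) (c : ℕ) (z : Fin n → ℝ) :
    ∑ S ∈ K.powersetCard (c+2), ∏ i ∈ S, z i
      = (∑ S ∈ ((K.erase u).erase v).powersetCard (c+2), ∏ i ∈ S, z i)
        + (z u + z v) * (∑ S ∈ ((K.erase u).erase v).powersetCard (c+1), ∏ i ∈ S, z i)
        + z u * z v * (∑ S ∈ ((K.erase u).erase v).powersetCard c, ∏ i ∈ S, z i) := by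
  set K' := (K.erase u).erase v with hK'
  have hvK' : v ∉ K' := Finset.notMem_erase _ _
  have huK' : u ∉ insert v K' := by
    simp only [Finset.mem_insert]
    rintro (rfl | h)
    · exact huv rfl
    · exact Finset.notMem_erase u K (Finset.mem_of_mem_erase h)
  have hKeq : insert u (insert v K') = K := by
    rw [hK', Finset.insert_erase (Finset.mem_erase.2 ⟨huv.symm, hv⟩), Finset.insert_erase hu]
  rw [← hKeq]
  rw [aux_sum_insert u _ huK' (c+1) z, aux_sum_insert v _ hvK' (c+1) z,
    aux_sum_insert v _ hvK' c z]
  ring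

/-- Monotonicity of `C(k,t)/k^t` in `k`. -/
lemma aux_choose_mono (t k ω : ℕ) (hk : 1 ≤ k) (hkω : k ≤ ω) :
    (k.choose t : ℝ) / (k : ℝ)^t ≤ (ω.choose t : ℝ) / (ω : ℝ)^t := by
  have hω : 1 ≤ ω := hk.trans hkω
  rcases lt_or_ge k t with h | h
  · rw [Nat.choose_eq_zero_of_lt h]
    have : (0:ℝ) ≤ (ω.choose t : ℝ) / (ω : ℝ)^t := by positivity
    simpa using this
  · have hnat : k.descFactorial t * ω^t ≤ ω.descFactorial t * k^t := by
      have hpow : ∀ a : ℕ, a ^ t = ∏ _i ∈ Finset.range t, a := by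
        intro a; rw [Finset.prod_const, Finset.card_range]
      rw [Nat.descFactorial_eq_prod_range, Nat.descFactorial_eq_prod_range, hpow, hpow,
        ← Finset.prod_mul_distrib, ← Finset.prod_mul_distrib]
      refine Finset.prod_le_prod (fun i _ => Nat.zero_le _) fun i hi => ?_
      rw [Nat.sub_mul, Nat.sub_mul, mul_comm ω k]
      exact Nat.sub_le_sub_left (Nat.mul_le_mul_left i hkω) _
    have hdk : k.descFactorial t = k.choose t * (Nat.factorial t) := by
      rw [Nat.choose_eq_descFactorial_div_factorial, Nat.div_mul_cancel (Nat.factorial_dvd_descFactorial _ _)]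
    have hdω : ω.descFactorial t = ω.choose t * (Nat.factorial t) := by
      rw [Nat.choose_eq_descFactorial_div_factorial, Nat.div_mul_cancel (Nat.factorial_dvd_descFactorial _ _)]
    rw [hdk, hdω] at hnat
    have hnat2 : k.choose t * ω^t ≤ ω.choose t * k^t := by
      have hfac : 0 < (Nat.factorial t) := Nat.factorial_pos t
      calc k.choose t * ω^t = k.choose t * ω^t := rfl
        _ ≤ ω.choose t * k^t := by nlinarith [hnat]
    rw [div_le_div_iff₀ (by positivity) (by positivity)]
    exact_mod_cast hnat2
end Aux

section Maclaurin
variable {n : ℕ}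

lemma aux_maclaurin (t : ℕ) (ht : 2 ≤ t) (K : Finset (Fin n)) (hK : K.Nonempty) :
    ∀ (y : Fin n → ℝ), (∀ i, 0 ≤ y i) → (∑ i ∈ K, y i = 1) →
      ∑ S ∈ K.powersetCard t, ∏ i ∈ S, y i ≤ (K.card.choose t : ℝ) / (K.card : ℝ)^t := by
  obtain ⟨c, rfl⟩ : ∃ c, t = c + 2 := ⟨t - 2, by omega⟩
  set t := c + 2
  set m : ℝ := ((K.card : ℝ))⁻¹ with hm
  have hk0 : (0:ℝ) < (K.card : ℝ) := by
    have := Finset.card_pos.2 hK; exact_mod_cast this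
  have hm0 : 0 ≤ m := by positivity
  suffices H : ∀ N : ℕ, ∀ y : Fin n → ℝ, (K.filter (fun i => y i ≠ m)).card ≤ N →
      (∀ i, 0 ≤ y i) → (∑ i ∈ K, y i = 1) →
      ∑ S ∈ K.powersetCard t, ∏ i ∈ S, y i ≤ (K.card.choose t : ℝ) / (K.card : ℝ)^t by
    exact fun y hy hs => H _ y le_rfl hy hs
  intro N
  induction N with
  | zero =>
    intro y hcard hy hs
    -- all coordinates equal m
    have hall : ∀ i ∈ K, y i = m := by
      intro i hi
      by_contra hne
      have : i ∈ K.filter (fun i => y i ≠ m) := Finset.mem_filter.2 ⟨hi, hne⟩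
      rw [Finset.card_eq_zero.1 (Nat.le_zero.1 hcard)] at this
      exact absurd this (Finset.notMem_empty i)
    have : ∑ S ∈ K.powersetCard t, ∏ i ∈ S, y i = (K.card.choose t : ℝ) * m ^ t := by
      rw [← Finset.card_powersetCard t K, ← nsmul_eq_mul, ← Finset.sum_const]
      refine Finset.sum_congr rfl fun S hS => ?_
      obtain ⟨hSK, hScard⟩ := Finset.mem_powersetCard.1 hS
      rw [← hScard, ← Finset.prod_const]
      exact Finset.prod_congr rfl fun i hi => hall i (hSK hi)
    rw [this, hm, div_eq_mul_inv, inv_pow]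
  | succ N ih =>
    intro y hcard hy hs
    by_cases huni : ∀ i ∈ K, y i = m
    · refine ih y ?_ hy hs
      have he : K.filter (fun i => y i ≠ m) = ∅ :=
        Finset.filter_eq_empty_iff.2 fun {i} hi h => h (huni i hi)
      rw [he]; simp
    push_neg at huni
    obtain ⟨w, hw, hwm⟩ := huni
    have hexu : ∃ u ∈ K, m < y u := by
      by_contra hcon; push_neg at hcon
      have hlt : ∑ i ∈ K, y i < ∑ i ∈ K, m :=
        Finset.sum_lt_sum hcon ⟨w, hw, lt_of_le_of_ne (hcon w hw) hwm⟩
      rw [hs, Finset.sum_const, nsmul_eq_mul, hm, mul_inv_cancel₀ (ne_of_gt hk0)] at hlt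
      exact lt_irrefl _ hlt
    have hexv : ∃ v ∈ K, y v < m := by
      by_contra hcon; push_neg at hcon
      have hlt : ∑ i ∈ K, m < ∑ i ∈ K, y i := by
        refine Finset.sum_lt_sum hcon ⟨w, hw, lt_of_le_of_ne (hcon w hw) (Ne.symm hwm)⟩
      rw [hs, Finset.sum_const, nsmul_eq_mul, hm, mul_inv_cancel₀ (ne_of_gt hk0)] at hlt
      exact lt_irrefl _ hlt
    obtain ⟨u, hu, hyu⟩ := hexu
    obtain ⟨v, hv, hyv⟩ := hexv
    have huv : u ≠ v := by rintro rfl; exact lt_asymm hyu hyv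
    set y' : Fin n → ℝ := fun i => if i = u then m else if i = v then y u + y v - m else y i
      with hy'
    have hy'u : y' u = m := by simp [hy']
    have hy'v : y' v = y u + y v - m := by simp [hy', huv.symm]
    have hagree : ∀ i, i ≠ u → i ≠ v → y' i = y i := by
      intro i h1 h2; simp [hy', h1, h2]
    have hy'nn : ∀ i, 0 ≤ y' i := by
      intro i
      rw [hy']
      dsimp only
      split
      · exact hm0
      · split
        · have := hy v; linarith
        · exact hy i
    -- decomposition of K
    set K' := (K.erase u).erase v with hK'
    have hvK' : v ∉ K' := Finset.notMem_erase _ _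
    have huK' : u ∉ insert v K' := by
      simp only [Finset.mem_insert]
      rintro (rfl | h)
      · exact huv rfl
      · exact Finset.notMem_erase u K (Finset.mem_of_mem_erase h)
    have hKeq : insert u (insert v K') = K := by
      rw [hK', Finset.insert_erase (Finset.mem_erase.2 ⟨huv.symm, hv⟩), Finset.insert_erase hu]
    have hK'notuv : ∀ i ∈ K', i ≠ u ∧ i ≠ v := by
      intro i hi
      exact ⟨fun h => (Finset.notMem_erase u K) (Finset.mem_of_mem_erase (h ▸ hi)),
        fun h => hvK' (h ▸ hi)⟩
    have hsum_dec : ∀ g : Fin n → ℝ, ∑ i ∈ K, g i = g u + g v + ∑ i ∈ K', g i := by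
      intro g
      rw [← hKeq, Finset.sum_insert huK', Finset.sum_insert hvK']
      ring
    -- sum preserved
    have hs' : ∑ i ∈ K, y' i = 1 := by
      rw [hsum_dec y', hy'u, hy'v]
      have : ∑ i ∈ K', y' i = ∑ i ∈ K', y i :=
        Finset.sum_congr rfl fun i hi => hagree i (hK'notuv i hi).1 (hK'notuv i hi).2
      rw [this]
      have := hsum_dec y
      rw [hs] at this
      linarith
    -- measure decreases
    have hmeas : (K.filter (fun i => y' i ≠ m)).card ≤ N := by
      have hsub : K.filter (fun i => y' i ≠ m) ⊆ (K.filter (fun i => y i ≠ m)).erase u := by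
        intro i hi
        obtain ⟨hiK, hine⟩ := Finset.mem_filter.1 hi
        have hiu : i ≠ u := by rintro rfl; exact hine hy'u
        rw [Finset.mem_erase]
        refine ⟨hiu, Finset.mem_filter.2 ⟨hiK, ?_⟩⟩
        by_cases hiv : i = v
        · subst hiv; exact ne_of_lt hyv
        · rw [← hagree i hiu hiv]; exact hine
      have humem : u ∈ K.filter (fun i => y i ≠ m) :=
        Finset.mem_filter.2 ⟨hu, ne_of_gt hyu⟩
      have := (Finset.card_le_card hsub).trans_lt (Finset.card_erase_lt_of_mem humem)
      omega
    -- the sum increases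
    have hstep : ∑ S ∈ K.powersetCard t, ∏ i ∈ S, y i ≤ ∑ S ∈ K.powersetCard t, ∏ i ∈ S, y' i := by
      have e1 := aux_expand2 K u v hu hv huv c y
      have e2 := aux_expand2 K u v hu hv huv c y'
      have heq : ∀ j : ℕ, ∑ S ∈ K'.powersetCard j, ∏ i ∈ S, y' i
          = ∑ S ∈ K'.powersetCard j, ∏ i ∈ S, y i := by
        intro j
        refine Finset.sum_congr rfl fun S hS => Finset.prod_congr rfl fun i hi => ?_
        have hiK' : i ∈ K' := (Finset.mem_powersetCard.1 hS).1 hi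
        exact hagree i (hK'notuv i hiK').1 (hK'notuv i hiK').2
      rw [e1, e2, ← hK', heq, heq, heq, hy'u, hy'v]
      have hC : 0 ≤ ∑ S ∈ K'.powersetCard c, ∏ i ∈ S, y i :=
        Finset.sum_nonneg fun S _ => Finset.prod_nonneg fun i _ => hy i
      have hkey : 0 ≤ (y u - m) * (m - y v) := by
        have h1 : 0 ≤ y u - m := by linarith
        have h2 : 0 ≤ m - y v := by linarith
        exact mul_nonneg h1 h2
      nlinarith [mul_nonneg hkey hC]
    exact hstep.trans (ih y' hmeas hy'nn hs')
end Maclaurin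

section MS
variable {n : ℕ}

/-- Decomposition of the clique sum along two nonadjacent vertices. -/
lemma aux_graph_expand (G : SimpleGraph (Fin n)) [DecidableRel G.Adj] (t : ℕ)
    (u v : Fin n) (huv : u ≠ v) (hadj : ¬ G.Adj u v)
    (y z : Fin n → ℝ) (hz : ∀ i, i ≠ u → i ≠ v → z i = y i) :
    ∑ S ∈ G.cliqueFinset t, ∏ i ∈ S, z i
      = z u * (∑ S ∈ (G.cliqueFinset t).filter (fun S => u ∈ S), ∏ i ∈ S.erase u, y i)
      + z v * (∑ S ∈ (G.cliqueFinset t).filter (fun S => v ∈ S), ∏ i ∈ S.erase v, y i)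
      + ∑ S ∈ (G.cliqueFinset t).filter (fun S => ¬(u ∈ S ∨ v ∈ S)), ∏ i ∈ S, y i := by
  have hnotboth : ∀ S ∈ G.cliqueFinset t, ¬(u ∈ S ∧ v ∈ S) := by
    rintro S hS ⟨hu, hv⟩
    exact hadj (((SimpleGraph.mem_cliqueFinset_iff.1 hS).isClique) hu hv huv)
  rw [← Finset.sum_filter_add_sum_filter_not (G.cliqueFinset t) (fun S => u ∈ S ∨ v ∈ S)]
  have hfe : (G.cliqueFinset t).filter (fun S => u ∈ S ∨ v ∈ S)
      = (G.cliqueFinset t).filter (fun S => u ∈ S) ∪ (G.cliqueFinset t).filter (fun S => v ∈ S) := by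
    rw [← Finset.filter_or]
  have hdisj : Disjoint ((G.cliqueFinset t).filter (fun S => u ∈ S))
      ((G.cliqueFinset t).filter (fun S => v ∈ S)) := by
    rw [Finset.disjoint_left]
    intro S h1 h2
    obtain ⟨hS, hu⟩ := Finset.mem_filter.1 h1
    obtain ⟨_, hv⟩ := Finset.mem_filter.1 h2
    exact hnotboth S hS ⟨hu, hv⟩
  rw [hfe, Finset.sum_union hdisj]
  have h1 : ∑ S ∈ (G.cliqueFinset t).filter (fun S => u ∈ S), ∏ i ∈ S, z i
      = z u * ∑ S ∈ (G.cliqueFinset t).filter (fun S => u ∈ S), ∏ i ∈ S.erase u, y i := by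
    rw [Finset.mul_sum]
    refine Finset.sum_congr rfl fun S hS => ?_
    obtain ⟨hSc, huS⟩ := Finset.mem_filter.1 hS
    have hvS : v ∉ S := fun h => hnotboth S hSc ⟨huS, h⟩
    rw [← Finset.prod_erase_mul S z huS, mul_comm]
    congr 1
    refine Finset.prod_congr rfl fun i hi => ?_
    obtain ⟨hiu, hiS⟩ := Finset.mem_erase.1 hi
    exact hz i hiu (fun h => hvS (h ▸ hiS))
  have h2 : ∑ S ∈ (G.cliqueFinset t).filter (fun S => v ∈ S), ∏ i ∈ S, z i
      = z v * ∑ S ∈ (G.cliqueFinset t).filter (fun S => v ∈ S), ∏ i ∈ S.erase v, y i := by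
    rw [Finset.mul_sum]
    refine Finset.sum_congr rfl fun S hS => ?_
    obtain ⟨hSc, hvS⟩ := Finset.mem_filter.1 hS
    have huS : u ∉ S := fun h => hnotboth S hSc ⟨h, hvS⟩
    rw [← Finset.prod_erase_mul S z hvS, mul_comm]
    congr 1
    refine Finset.prod_congr rfl fun i hi => ?_
    obtain ⟨hiv, hiS⟩ := Finset.mem_erase.1 hi
    exact hz i (fun h => huS (h ▸ hiS)) hiv
  have h3 : ∑ S ∈ (G.cliqueFinset t).filter (fun S => ¬(u ∈ S ∨ v ∈ S)), ∏ i ∈ S, z i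
      = ∑ S ∈ (G.cliqueFinset t).filter (fun S => ¬(u ∈ S ∨ v ∈ S)), ∏ i ∈ S, y i := by
    refine Finset.sum_congr rfl fun S hS => Finset.prod_congr rfl fun i hi => ?_
    obtain ⟨_, hnS⟩ := Finset.mem_filter.1 hS
    push_neg at hnS
    exact hz i (fun h => hnS.1 (h ▸ hi)) (fun h => hnS.2 (h ▸ hi))
  rw [h1, h2, h3]

/-- One shifting step for nonadjacent vertices both in the support. -/
lemma aux_shift (G : SimpleGraph (Fin n)) [DecidableRel G.Adj] (t : ℕ)
    (y : Fin n → ℝ) (hy : ∀ i, 0 ≤ y i) (hs : ∑ i, y i = 1)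
    (u v : Fin n) (huv : u ≠ v) (hadj : ¬ G.Adj u v) (hu0 : y u ≠ 0) (hv0 : y v ≠ 0) :
    ∃ y' : Fin n → ℝ, (∀ i, 0 ≤ y' i) ∧ (∑ i, y' i = 1) ∧
      (∑ S ∈ G.cliqueFinset t, ∏ i ∈ S, y i ≤ ∑ S ∈ G.cliqueFinset t, ∏ i ∈ S, y' i) ∧
      (Finset.univ.filter (fun i => y' i ≠ 0)) ⊂ (Finset.univ.filter (fun i => y i ≠ 0)) := by
  -- symmetric core construction
  have core : ∀ (a b : Fin n), a ≠ b → ¬ G.Adj a b → y a ≠ 0 → y b ≠ 0 →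
      ((∑ S ∈ (G.cliqueFinset t).filter (fun S => b ∈ S), ∏ i ∈ S.erase b, y i)
        ≤ (∑ S ∈ (G.cliqueFinset t).filter (fun S => a ∈ S), ∏ i ∈ S.erase a, y i)) →
      ∃ y' : Fin n → ℝ, (∀ i, 0 ≤ y' i) ∧ (∑ i, y' i = 1) ∧
      (∑ S ∈ G.cliqueFinset t, ∏ i ∈ S, y i ≤ ∑ S ∈ G.cliqueFinset t, ∏ i ∈ S, y' i) ∧
      (Finset.univ.filter (fun i => y' i ≠ 0)) ⊂ (Finset.univ.filter (fun i => y i ≠ 0)) := by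
    intro a b hab hnadj ha0 hb0 hP
    set y' : Fin n → ℝ := fun i => if i = a then y a + y b else if i = b then 0 else y i with hy'
    have hy'a : y' a = y a + y b := by simp [hy']
    have hy'b : y' b = 0 := by simp [hy', hab.symm]
    have hagree : ∀ i, i ≠ a → i ≠ b → y' i = y i := by
      intro i h1 h2; simp [hy', h1, h2]
    refine ⟨y', ?_, ?_, ?_, ?_⟩
    · intro i
      rw [hy']; dsimp only
      split
      · have := hy a; have := hy b; linarith
      · split
        · exact le_refl 0
        · exact hy i
    · have hterm : ∀ i, y' i = y i + ((if i = a then y b else 0) - (if i = b then y b else 0)) := by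
        intro i
        by_cases h1 : i = a
        · subst h1
          rw [hy'a, if_pos rfl, if_neg hab]; ring
        · by_cases h2 : i = b
          · subst h2
            rw [hy'b, if_neg h1, if_pos rfl]; ring
          · rw [hagree i h1 h2, if_neg h1, if_neg h2]; ring
      calc ∑ i, y' i = ∑ i, (y i + ((if i = a then y b else 0) - (if i = b then y b else 0))) :=
            Finset.sum_congr rfl fun i _ => hterm i
        _ = 1 := by
            rw [Finset.sum_add_distrib, Finset.sum_sub_distrib, hs,
              Finset.sum_ite_eq' Finset.univ a (fun _ => y b),
              Finset.sum_ite_eq' Finset.univ b (fun _ => y b)]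
            simp
    · have e1 := aux_graph_expand G t a b hab hnadj y y (fun i _ _ => rfl)
      have e2 := aux_graph_expand G t a b hab hnadj y y' hagree
      rw [e1, e2, hy'a, hy'b]
      have hb : 0 ≤ y b := hy b
      nlinarith [mul_le_mul_of_nonneg_left hP hb]
    · rw [Finset.ssubset_iff_of_subset]
      · refine ⟨b, ?_, ?_⟩
        · exact Finset.mem_filter.2 ⟨Finset.mem_univ b, hb0⟩
        · intro hmem
          exact (Finset.mem_filter.1 hmem).2 hy'b
      · intro i hi
        obtain ⟨_, hi0⟩ := Finset.mem_filter.1 hi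
        refine Finset.mem_filter.2 ⟨Finset.mem_univ i, ?_⟩
        by_cases h1 : i = a
        · subst h1; exact ha0
        · by_cases h2 : i = b
          · subst h2; exact absurd hy'b hi0
          · rw [← hagree i h1 h2]; exact hi0
  rcases le_total
      (∑ S ∈ (G.cliqueFinset t).filter (fun S => v ∈ S), ∏ i ∈ S.erase v, y i)
      (∑ S ∈ (G.cliqueFinset t).filter (fun S => u ∈ S), ∏ i ∈ S.erase u, y i) with hP | hP
  · exact core u v huv hadj hu0 hv0 hP
  · exact core v u huv.symm (fun h => hadj h.symm) hv0 hu0 hP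

/-- Motzkin–Straus-type bound for the clique sum on the simplex. -/
lemma aux_MS (G : SimpleGraph (Fin n)) [DecidableRel G.Adj] (t : ℕ) (ht : 2 ≤ t)
    (htω : t ≤ G.cliqueNum) :
    ∀ (y : Fin n → ℝ), (∀ i, 0 ≤ y i) → (∑ i, y i = 1) →
      ∑ S ∈ G.cliqueFinset t, ∏ i ∈ S, y i
        ≤ (G.cliqueNum.choose t : ℝ) / (G.cliqueNum : ℝ)^t := by
  suffices H : ∀ N : ℕ, ∀ y : Fin n → ℝ, (Finset.univ.filter (fun i => y i ≠ 0)).card ≤ N →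
      (∀ i, 0 ≤ y i) → (∑ i, y i = 1) →
      ∑ S ∈ G.cliqueFinset t, ∏ i ∈ S, y i
        ≤ (G.cliqueNum.choose t : ℝ) / (G.cliqueNum : ℝ)^t by
    exact fun y hy hs => H _ y le_rfl hy hs
  intro N
  induction N with
  | zero =>
    intro y hcard hy hs
    exfalso
    have hzero : ∀ i, y i = 0 := by
      intro i
      by_contra hne
      have : i ∈ Finset.univ.filter (fun i => y i ≠ 0) :=
        Finset.mem_filter.2 ⟨Finset.mem_univ i, hne⟩
      rw [Finset.card_eq_zero.1 (Nat.le_zero.1 hcard)] at this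
      exact absurd this (Finset.notMem_empty i)
    rw [Finset.sum_congr rfl (fun i _ => hzero i)] at hs
    simp at hs
  | succ N ih =>
    intro y hcard hy hs
    set K := Finset.univ.filter (fun i => y i ≠ 0) with hKdef
    by_cases hcl : G.IsClique (K : Set (Fin n))
    · -- support is a clique: use Maclaurin
      have hKne : K.Nonempty := by
        by_contra hne
        rw [Finset.not_nonempty_iff_eq_empty] at hne
        have hzero : ∀ i, y i = 0 := by
          intro i
          by_contra h
          have : i ∈ K := Finset.mem_filter.2 ⟨Finset.mem_univ i, h⟩
          rw [hne] at this
          exact absurd this (Finset.notMem_empty i)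
        rw [Finset.sum_congr rfl (fun i _ => hzero i)] at hs
        simp at hs
      have hzero_off : ∀ i ∉ K, y i = 0 := by
        intro i hi
        by_contra h
        exact hi (Finset.mem_filter.2 ⟨Finset.mem_univ i, h⟩)
      have hsumK : ∑ i ∈ K, y i = 1 := by
        rw [← hs]
        exact Finset.sum_subset (Finset.subset_univ K)
          (fun i _ hi => hzero_off i hi)
      have hcut : ∑ S ∈ G.cliqueFinset t, ∏ i ∈ S, y i
          = ∑ S ∈ K.powersetCard t, ∏ i ∈ S, y i := by
        rw [← Finset.sum_filter_of_ne (p := fun S => S ⊆ K)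
          (fun S _ hne => fun i hi => Finset.mem_filter.2
            ⟨Finset.mem_univ i, Finset.prod_ne_zero_iff.1 hne i hi⟩)]
        congr 1
        ext S
        rw [Finset.mem_filter, Finset.mem_powersetCard, SimpleGraph.mem_cliqueFinset_iff]
        constructor
        · rintro ⟨hnc, hsub⟩; exact ⟨hsub, hnc.card_eq⟩
        · rintro ⟨hsub, hc⟩
          exact ⟨⟨hcl.subset (Finset.coe_subset.2 hsub), hc⟩, hsub⟩
      rw [hcut]
      have hKcard : K.card ≤ G.cliqueNum := IsClique.card_le_cliqueNum (tc := hcl)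
      have hKpos : 1 ≤ K.card := Finset.card_pos.2 hKne
      exact (aux_maclaurin t ht K hKne y hy hsumK).trans
        (aux_choose_mono t K.card G.cliqueNum hKpos hKcard)
    · -- support not a clique: shift
      rw [SimpleGraph.isClique_iff, Set.Pairwise] at hcl
      push_neg at hcl
      obtain ⟨u, hu, v, hv, huv, hadj⟩ := hcl
      have hu0 : y u ≠ 0 := (Finset.mem_filter.1 (Finset.mem_coe.1 hu)).2
      have hv0 : y v ≠ 0 := (Finset.mem_filter.1 (Finset.mem_coe.1 hv)).2
      obtain ⟨y', h1, h2, h3, h4⟩ := aux_shift G t y hy hs u v huv hadj hu0 hv0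
      refine h3.trans (ih y' ?_ h1 h2)
      have hlt := Finset.card_lt_card h4
      rw [← hKdef] at hlt
      omega
end MS

/-- Combinatorial core of the tensor spectral bound: for x with ∑ x_i^t = 1,
t·Σ_{S∈C_t(G)} Π_{i∈S} x_i ≤ (t/ω)·C(ω,t)^{1/t}·|C_t(G)|^{(t-1)/t}. -/
theorem stmt_6 (n t : ℕ) (G : SimpleGraph (Fin n)) [DecidableRel G.Adj]
    (ht : 2 ≤ t) (htω : t ≤ G.cliqueNum)
    (x : Fin n → ℝ) (hx : ∀ i, 0 ≤ x i) (hsum : ∑ i, x i ^ t = 1) :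
    (t : ℝ) * ∑ S ∈ G.cliqueFinset t, ∏ i ∈ S, x i ≤
      ((t : ℝ) / G.cliqueNum) * (G.cliqueNum.choose t : ℝ) ^ ((1 : ℝ) / t) *
        ((G.cliqueFinset t).card : ℝ) ^ (((t : ℝ) - 1) / t) := by
  have hω : 0 < G.cliqueNum := lt_of_lt_of_le (by omega) htω
  have htR : (0:ℝ) < (t:ℝ) := by exact_mod_cast (by omega : 0 < t)
  rcases Nat.eq_zero_or_pos (G.cliqueFinset t).card with hm | hm
  · -- no t-cliques
    have hemp : G.cliqueFinset t = ∅ := Finset.card_eq_zero.1 hm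
    rw [hemp]
    have hzr : ((0:ℝ) : ℝ) ^ (((t:ℝ) - 1) / t) = 0 := by
      apply Real.zero_rpow
      have h2 : (2:ℝ) ≤ (t:ℝ) := by exact_mod_cast ht
      exact ne_of_gt (div_pos (by linarith) htR)
    simp [hzr]
  · have hA0 : 0 ≤ ∑ S ∈ G.cliqueFinset t, ∏ i ∈ S, x i :=
      Finset.sum_nonneg fun S _ => Finset.prod_nonneg fun i _ => hx i
    have hMS := aux_MS G t ht htω (fun i => x i ^ t) (fun i => pow_nonneg (hx i) t) hsum
    have hft : ∑ S ∈ G.cliqueFinset t, ∏ i ∈ S, x i ^ t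
        = ∑ S ∈ G.cliqueFinset t, (∏ i ∈ S, x i) ^ t := by
      exact Finset.sum_congr rfl fun S _ => Finset.prod_pow S t x
    have hpow := pow_sum_div_card_le_sum_pow
      (s := G.cliqueFinset t) (f := fun S => ∏ i ∈ S, x i)
      (fun S _ => Finset.prod_nonneg fun i _ => hx i) (t - 1)
    have ht1 : t - 1 + 1 = t := by omega
    rw [ht1] at hpow
    rw [← hft] at hpow
    have hmpos : (0:ℝ) < ((G.cliqueFinset t).card : ℝ) ^ (t-1) := by
      have : (0:ℝ) < ((G.cliqueFinset t).card : ℝ) := by exact_mod_cast hm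
      positivity
    have hV : (∑ S ∈ G.cliqueFinset t, ∏ i ∈ S, x i) ^ t
        ≤ ((G.cliqueFinset t).card : ℝ) ^ (t-1)
          * ((G.cliqueNum.choose t : ℝ) / (G.cliqueNum : ℝ)^t) := by
      rw [div_le_iff₀ hmpos] at hpow
      calc (∑ S ∈ G.cliqueFinset t, ∏ i ∈ S, x i) ^ t
          ≤ (∑ S ∈ G.cliqueFinset t, ∏ i ∈ S, x i ^ t) * ((G.cliqueFinset t).card : ℝ) ^ (t-1) :=
            hpow
        _ ≤ ((G.cliqueNum.choose t : ℝ) / (G.cliqueNum : ℝ)^t)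
              * ((G.cliqueFinset t).card : ℝ) ^ (t-1) := by
            exact mul_le_mul_of_nonneg_right hMS (le_of_lt hmpos)
        _ = ((G.cliqueFinset t).card : ℝ) ^ (t-1)
              * ((G.cliqueNum.choose t : ℝ) / (G.cliqueNum : ℝ)^t) := by ring
    have hroot : ∑ S ∈ G.cliqueFinset t, ∏ i ∈ S, x i
        ≤ (((G.cliqueFinset t).card : ℝ) ^ (t-1)
            * ((G.cliqueNum.choose t : ℝ) / (G.cliqueNum : ℝ)^t)) ^ ((1:ℝ)/t) := by
      have h1 : ∑ S ∈ G.cliqueFinset t, ∏ i ∈ S, x i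
          = ((∑ S ∈ G.cliqueFinset t, ∏ i ∈ S, x i) ^ t) ^ ((1:ℝ)/t) := by
        rw [← Real.rpow_natCast (∑ S ∈ G.cliqueFinset t, ∏ i ∈ S, x i) t,
          ← Real.rpow_mul hA0, mul_one_div, div_self (ne_of_gt htR), Real.rpow_one]
      rw [h1]
      exact Real.rpow_le_rpow (by positivity) hV (by positivity)
    have hωR : (0:ℝ) < (G.cliqueNum : ℝ) := by exact_mod_cast hω
    have hsimp : (((G.cliqueFinset t).card : ℝ) ^ (t-1)
            * ((G.cliqueNum.choose t : ℝ) / (G.cliqueNum : ℝ)^t)) ^ ((1:ℝ)/t)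
        = ((G.cliqueFinset t).card : ℝ) ^ (((t:ℝ)-1)/t)
            * ((G.cliqueNum.choose t : ℝ) ^ ((1:ℝ)/t) / (G.cliqueNum : ℝ)) := by
      rw [Real.mul_rpow (by positivity) (by positivity),
        Real.div_rpow (by positivity) (by positivity)]
      congr 1
      · rw [← Real.rpow_natCast ((G.cliqueFinset t).card : ℝ) (t-1),
          ← Real.rpow_mul (by positivity)]
        congr 1
        rw [Nat.cast_sub (by omega : 1 ≤ t)]
        push_cast
        field_simp
      · congr 1
        rw [← Real.rpow_natCast (G.cliqueNum : ℝ) t, ← Real.rpow_mul (le_of_lt hωR),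
          mul_one_div, div_self (ne_of_gt htR), Real.rpow_one]
    calc (t:ℝ) * ∑ S ∈ G.cliqueFinset t, ∏ i ∈ S, x i
        ≤ (t:ℝ) * (((G.cliqueFinset t).card : ℝ) ^ (((t:ℝ)-1)/t)
            * ((G.cliqueNum.choose t : ℝ) ^ ((1:ℝ)/t) / (G.cliqueNum : ℝ))) := by
          rw [← hsimp]
          exact mul_le_mul_of_nonneg_left hroot (le_of_lt htR)
      _ = ((t : ℝ) / G.cliqueNum) * (G.cliqueNum.choose t : ℝ) ^ ((1 : ℝ) / t) *
          ((G.cliqueFinset t).card : ℝ) ^ (((t : ℝ) - 1) / t) := by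
          ring
end

section
/- Let G be a K_{r+1}-free graph on n vertices and 2 ≤ t ≤ r. Then |C_t(G)| ≤ (n/r)^t · C(r,t). (Erdős's upper bound on the number of t-cliques in a K_{r+1}-free graph.) -/
open SimpleGraph Finset

namespace ErdosCliqueAux

variable {n : ℕ} (G : SimpleGraph (Fin n)) [DecidableRel G.Adj]

/-- The set of common neighbours of a finset `S` (excluding `S` itself). -/
def nbr (S : Finset (Fin n)) : Finset (Fin n) :=
  Finset.univ.filter (fun v => v ∉ S ∧ ∀ u ∈ S, G.Adj v u)

lemma mem_nbr {S : Finset (Fin n)} {v : Fin n} :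
    v ∈ nbr G S ↔ v ∉ S ∧ ∀ u ∈ S, G.Adj v u := by
  simp [nbr]

lemma insert_mem_cliqueFinset {t : ℕ} {S : Finset (Fin n)} {v : Fin n}
    (hS : S ∈ G.cliqueFinset t) (hv : v ∈ nbr G S) :
    insert v S ∈ G.cliqueFinset (t + 1) := by
  rw [G.mem_cliqueFinset_iff] at hS ⊢
  exact hS.insert fun u hu => (mem_nbr G |>.1 hv).2 u hu

lemma erase_mem_cliqueFinset {t : ℕ} {T : Finset (Fin n)} {v : Fin n}
    (hT : T ∈ G.cliqueFinset (t + 1)) (hv : v ∈ T) :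
    T.erase v ∈ G.cliqueFinset t := by
  rw [G.mem_cliqueFinset_iff] at hT ⊢
  refine ⟨hT.1.subset ?_, ?_⟩
  · exact_mod_cast Finset.erase_subset _ _
  · rw [Finset.card_erase_of_mem hv, hT.2]
    omega

lemma mem_nbr_erase {t : ℕ} {T : Finset (Fin n)} {v : Fin n}
    (hT : T ∈ G.cliqueFinset t) (hv : v ∈ T) :
    v ∈ nbr G (T.erase v) := by
  rw [mem_nbr]
  refine ⟨Finset.notMem_erase _ _, fun u hu => ?_⟩
  have h1 := Finset.mem_erase.1 hu
  exact ((G.mem_cliqueFinset_iff).1 hT).1 (by exact_mod_cast hv)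
    (by exact_mod_cast h1.2) (Ne.symm h1.1)

/-- Counting pairs (t-clique, extension vertex): each (t+1)-clique arises t+1 times. -/
lemma sum_nbr_card (t : ℕ) :
    ∑ S ∈ G.cliqueFinset t, #(nbr G S) = (t + 1) * #(G.cliqueFinset (t + 1)) := by
  have h3 : ∑ T ∈ G.cliqueFinset (t + 1), #T = (t + 1) * #(G.cliqueFinset (t + 1)) := by
    rw [Finset.sum_congr rfl (fun T hT => ((G.mem_cliqueFinset_iff).1 hT).card_eq),
      Finset.sum_const, smul_eq_mul, mul_comm]
  rw [← h3]
  rw [show (∑ S ∈ G.cliqueFinset t, #(nbr G S))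
      = ∑ x ∈ (G.cliqueFinset t).sigma (fun S => nbr G S), 1 by
    rw [Finset.sum_sigma]
    exact Finset.sum_congr rfl fun S _ => Finset.card_eq_sum_ones _]
  rw [show (∑ T ∈ G.cliqueFinset (t + 1), #T)
      = ∑ x ∈ (G.cliqueFinset (t + 1)).sigma (fun T => T), 1 by
    rw [Finset.sum_sigma]
    exact Finset.sum_congr rfl fun T _ => Finset.card_eq_sum_ones _]
  refine Finset.sum_bij' (fun p _ => (⟨insert p.2 p.1, p.2⟩ : Σ _ : Finset (Fin n), Fin n))
    (fun p _ => (⟨p.1.erase p.2, p.2⟩ : Σ _ : Finset (Fin n), Fin n)) ?_ ?_ ?_ ?_ ?_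
  · rintro ⟨S, v⟩ hp
    rw [Finset.mem_sigma] at hp ⊢
    exact ⟨insert_mem_cliqueFinset G hp.1 hp.2, Finset.mem_insert_self _ _⟩
  · rintro ⟨T, v⟩ hp
    rw [Finset.mem_sigma] at hp ⊢
    exact ⟨erase_mem_cliqueFinset G hp.1 hp.2, mem_nbr_erase G hp.1 hp.2⟩
  · rintro ⟨S, v⟩ hp
    rw [Finset.mem_sigma] at hp
    have hv : v ∉ S := ((mem_nbr G).1 hp.2).1
    simp only [Finset.erase_insert hv]
  · rintro ⟨T, v⟩ hp
    rw [Finset.mem_sigma] at hp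
    simp only [Finset.insert_erase hp.2]
  · intros; rfl

/-- Double counting: summing the extension counts of (t+1)-cliques with a marked vertex removed
equals the sum of squares over t-cliques. -/
lemma sum_sum_erase (t : ℕ) :
    ∑ T ∈ G.cliqueFinset (t + 1), ∑ v ∈ T, #(nbr G (T.erase v))
      = ∑ S ∈ G.cliqueFinset t, #(nbr G S) ^ 2 := by
  rw [show (∑ T ∈ G.cliqueFinset (t + 1), ∑ v ∈ T, #(nbr G (T.erase v)))
      = ∑ x ∈ (G.cliqueFinset (t + 1)).sigma (fun T => T), #(nbr G (x.1.erase x.2)) by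
    rw [Finset.sum_sigma]]
  rw [show (∑ S ∈ G.cliqueFinset t, #(nbr G S) ^ 2)
      = ∑ x ∈ (G.cliqueFinset t).sigma (fun S => nbr G S), #(nbr G x.1) by
    rw [Finset.sum_sigma]
    exact Finset.sum_congr rfl fun S _ => by
      simp only [Finset.sum_const, smul_eq_mul, sq]]
  refine Finset.sum_bij' (fun p _ => (⟨p.1.erase p.2, p.2⟩ : Σ _ : Finset (Fin n), Fin n))
    (fun p _ => (⟨insert p.2 p.1, p.2⟩ : Σ _ : Finset (Fin n), Fin n)) ?_ ?_ ?_ ?_ ?_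
  · rintro ⟨T, v⟩ hp
    rw [Finset.mem_sigma] at hp ⊢
    exact ⟨erase_mem_cliqueFinset G hp.1 hp.2, mem_nbr_erase G hp.1 hp.2⟩
  · rintro ⟨S, v⟩ hp
    rw [Finset.mem_sigma] at hp ⊢
    exact ⟨insert_mem_cliqueFinset G hp.1 hp.2, Finset.mem_insert_self _ _⟩
  · rintro ⟨T, v⟩ hp
    rw [Finset.mem_sigma] at hp
    simp only [Finset.insert_erase hp.2]
  · rintro ⟨S, v⟩ hp
    rw [Finset.mem_sigma] at hp
    have hv : v ∉ S := ((mem_nbr G).1 hp.2).1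
    simp only [Finset.erase_insert hv]
  · intros; rfl

/-- The key local inequality: for a (t+1)-clique `T`,
`∑_{v ∈ T} |N(T∖v)| ≤ t·|N(T)| + n`. -/
lemma sum_erase_le {t : ℕ} {T : Finset (Fin n)} (hT : T ∈ G.cliqueFinset (t + 1)) :
    ∑ v ∈ T, #(nbr G (T.erase v)) ≤ t * #(nbr G T) + n := by
  have hcard : #T = t + 1 := ((G.mem_cliqueFinset_iff).1 hT).card_eq
  have hswap : ∑ v ∈ T, #(nbr G (T.erase v))
      = ∑ u ∈ Finset.univ, #(T.filter (fun v => u ∈ nbr G (T.erase v))) := by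
    calc ∑ v ∈ T, #(nbr G (T.erase v))
        = ∑ v ∈ T, ∑ u ∈ Finset.univ, if u ∈ nbr G (T.erase v) then 1 else 0 := by
          refine Finset.sum_congr rfl fun v _ => ?_
          rw [← Finset.card_filter, Finset.filter_mem_eq_inter, Finset.univ_inter]
      _ = ∑ u ∈ Finset.univ, ∑ v ∈ T, if u ∈ nbr G (T.erase v) then 1 else 0 :=
          Finset.sum_comm
      _ = ∑ u ∈ Finset.univ, #(T.filter (fun v => u ∈ nbr G (T.erase v))) :=
          Finset.sum_congr rfl fun u _ => (Finset.card_filter _ _).symm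
  rw [hswap]
  have hsplit := Finset.sum_filter_add_sum_filter_not Finset.univ
    (fun u => u ∈ nbr G T) (fun u => #(T.filter (fun v => u ∈ nbr G (T.erase v))))
  rw [← hsplit]
  have h1 : ∑ u ∈ Finset.univ.filter (fun u => u ∈ nbr G T),
      #(T.filter (fun v => u ∈ nbr G (T.erase v))) ≤ (t + 1) * #(nbr G T) := by
    calc ∑ u ∈ Finset.univ.filter (fun u => u ∈ nbr G T),
        #(T.filter (fun v => u ∈ nbr G (T.erase v)))
        ≤ ∑ _u ∈ Finset.univ.filter (fun u => u ∈ nbr G T), (t + 1) := by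
          refine Finset.sum_le_sum fun u _ => ?_
          calc #(T.filter (fun v => u ∈ nbr G (T.erase v))) ≤ #T :=
                Finset.card_le_card (Finset.filter_subset _ _)
            _ = t + 1 := hcard
      _ = #(Finset.univ.filter (fun u => u ∈ nbr G T)) * (t + 1) := by
          rw [Finset.sum_const, smul_eq_mul]
      _ = (t + 1) * #(nbr G T) := by
          rw [mul_comm, Finset.filter_mem_eq_inter, Finset.univ_inter]
  have h2 : ∑ u ∈ Finset.univ.filter (fun u => ¬u ∈ nbr G T),
      #(T.filter (fun v => u ∈ nbr G (T.erase v))) ≤ n - #(nbr G T) := by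
    calc ∑ u ∈ Finset.univ.filter (fun u => ¬u ∈ nbr G T),
        #(T.filter (fun v => u ∈ nbr G (T.erase v)))
        ≤ ∑ _u ∈ Finset.univ.filter (fun u => ¬u ∈ nbr G T), 1 := by
          refine Finset.sum_le_sum fun u hu => ?_
          rw [Finset.mem_filter] at hu
          refine Finset.card_le_one.2 fun v hv w hw => ?_
          by_contra hvw
          rw [Finset.mem_filter] at hv hw
          obtain ⟨hvT, hv2⟩ := hv
          obtain ⟨hwT, hw2⟩ := hw
          rw [mem_nbr] at hv2 hw2
          -- u is adjacent to everything in T and not in T, contradiction with u ∉ nbr G T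
          apply hu.2
          rw [mem_nbr]
          have huv : u ≠ v := by
            intro h; subst h
            exact hw2.1 (Finset.mem_erase.2 ⟨hvw, hvT⟩)
          have huw : u ≠ w := by
            intro h; subst h
            exact hv2.1 (Finset.mem_erase.2 ⟨fun h' => hvw h'.symm, hwT⟩)
          have huT : u ∉ T := by
            intro h
            exact hv2.1 (Finset.mem_erase.2 ⟨huv, h⟩)
          refine ⟨huT, fun x hx => ?_⟩
          by_cases hxv : x = v
          · subst hxv
            exact hw2.2 x (Finset.mem_erase.2 ⟨hvw, hx⟩)
          · exact hv2.2 x (Finset.mem_erase.2 ⟨hxv, hx⟩)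
      _ = #(Finset.univ.filter (fun u => ¬u ∈ nbr G T)) := by
          rw [Finset.sum_const, smul_eq_mul, mul_one]
      _ = n - #(nbr G T) := by
          have := Finset.card_filter_add_card_filter_not
            (s := (Finset.univ : Finset (Fin n))) (p := fun u => u ∈ nbr G T)
          rw [Finset.filter_mem_eq_inter, Finset.univ_inter] at this
          simp only [Finset.card_univ, Fintype.card_fin] at this
          omega
  have h1' : ∑ u ∈ Finset.univ.filter (fun u => u ∈ nbr G T),
      #(T.filter (fun v => u ∈ nbr G (T.erase v))) ≤ t * #(nbr G T) + #(nbr G T) :=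
    h1.trans_eq (by ring)
  have hd : #(nbr G T) ≤ n := by
    calc #(nbr G T) ≤ #(Finset.univ : Finset (Fin n)) :=
      Finset.card_le_card (Finset.subset_univ _)
      _ = n := by rw [Finset.card_univ, Fintype.card_fin]
  omega

/-- Moon–Moser-type inequality. -/
lemma moon_moser (t : ℕ) :
    ((t + 1) * #(G.cliqueFinset (t + 1))) ^ 2
      ≤ #(G.cliqueFinset t) *
        (t * (t + 2) * #(G.cliqueFinset (t + 2)) + n * #(G.cliqueFinset (t + 1))) := by
  have hCS : (∑ S ∈ G.cliqueFinset t, #(nbr G S) * 1) ^ 2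
      ≤ (∑ S ∈ G.cliqueFinset t, #(nbr G S) ^ 2) * ∑ S ∈ G.cliqueFinset t, 1 ^ 2 :=
    Finset.sum_mul_sq_le_sq_mul_sq _ _ _
  simp only [mul_one, one_pow, Finset.sum_const, smul_eq_mul] at hCS
  rw [sum_nbr_card] at hCS
  have hupper : ∑ S ∈ G.cliqueFinset t, #(nbr G S) ^ 2
      ≤ t * (t + 2) * #(G.cliqueFinset (t + 2)) + n * #(G.cliqueFinset (t + 1)) := by
    rw [← sum_sum_erase]
    calc ∑ T ∈ G.cliqueFinset (t + 1), ∑ v ∈ T, #(nbr G (T.erase v))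
        ≤ ∑ T ∈ G.cliqueFinset (t + 1), (t * #(nbr G T) + n) :=
          Finset.sum_le_sum fun T hT => sum_erase_le G hT
      _ = t * ∑ T ∈ G.cliqueFinset (t + 1), #(nbr G T)
            + n * #(G.cliqueFinset (t + 1)) := by
          rw [Finset.sum_add_distrib, Finset.mul_sum, Finset.sum_const, smul_eq_mul, mul_comm]
      _ = t * ((t + 2) * #(G.cliqueFinset (t + 2))) + n * #(G.cliqueFinset (t + 1)) := by
          rw [sum_nbr_card G (t + 1)]
      _ = t * (t + 2) * #(G.cliqueFinset (t + 2)) + n * #(G.cliqueFinset (t + 1)) := by ring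
  calc ((t + 1) * #(G.cliqueFinset (t + 1))) ^ 2
      ≤ (∑ S ∈ G.cliqueFinset t, #(nbr G S) ^ 2) * #(G.cliqueFinset t) := hCS
    _ = #(G.cliqueFinset t) * ∑ S ∈ G.cliqueFinset t, #(nbr G S) ^ 2 := mul_comm _ _
    _ ≤ _ := Nat.mul_le_mul_left _ hupper


lemma card_cliqueFinset_one : #(G.cliqueFinset 1) = n := by
  have h : G.cliqueFinset 1
      = Finset.univ.map ⟨fun v => ({v} : Finset (Fin n)), fun a b h => by simpa using h⟩ := by
    ext S
    simp only [G.mem_cliqueFinset_iff, SimpleGraph.isNClique_one, Finset.mem_map,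
      Finset.mem_univ, true_and, Function.Embedding.coeFn_mk]
    constructor
    · rintro ⟨a, rfl⟩; exact ⟨a, rfl⟩
    · rintro ⟨a, rfl⟩; exact ⟨a, rfl⟩
  rw [h, Finset.card_map, Finset.card_univ, Fintype.card_fin]

lemma cascade_aux (d : ℕ) :
    ∀ t : ℕ, G.CliqueFree (t + 1 + d + 1) →
      (t + 1 + d) * (t + 1) * #(G.cliqueFinset (t + 1))
        ≤ n * (d + 1) * #(G.cliqueFinset t) := by
  induction d with
  | zero =>
    intro t hfree
    have hc2 : #(G.cliqueFinset (t + 2)) = 0 := by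
      rw [Finset.card_eq_zero, SimpleGraph.cliqueFinset_eq_empty_iff]
      simpa using hfree
    have hMM := moon_moser G t
    rw [hc2] at hMM
    simp only [Nat.mul_zero, Nat.zero_add] at hMM
    by_cases hb : #(G.cliqueFinset (t + 1)) = 0
    · simp [hb]
    · have hpos : 0 < #(G.cliqueFinset (t + 1)) := Nat.pos_of_ne_zero hb
      have h' : ((t + 1 + 0) * (t + 1) * #(G.cliqueFinset (t + 1))) * #(G.cliqueFinset (t + 1))
          ≤ (n * (0 + 1) * #(G.cliqueFinset t)) * #(G.cliqueFinset (t + 1)) := by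
        calc ((t + 1 + 0) * (t + 1) * #(G.cliqueFinset (t + 1))) * #(G.cliqueFinset (t + 1))
            = ((t + 1) * #(G.cliqueFinset (t + 1))) ^ 2 := by ring
          _ ≤ #(G.cliqueFinset t) * (n * #(G.cliqueFinset (t + 1))) := hMM
          _ = (n * (0 + 1) * #(G.cliqueFinset t)) * #(G.cliqueFinset (t + 1)) := by ring
      exact Nat.le_of_mul_le_mul_right h' hpos
  | succ d ih =>
    intro t hfree
    have hfree' : G.CliqueFree (t + 1 + 1 + d + 1) :=
      (show t + 1 + (d + 1) + 1 = t + 1 + 1 + d + 1 by ring) ▸ hfree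
    have ih' : (t + 1 + (d + 1)) * (t + 2) * #(G.cliqueFinset (t + 2))
        ≤ n * (d + 1) * #(G.cliqueFinset (t + 1)) := by
      rw [show t + 1 + (d + 1) = t + 1 + 1 + d by ring]
      exact ih (t + 1) hfree'
    have hMM := moon_moser G t
    by_cases hb : #(G.cliqueFinset (t + 1)) = 0
    · simp [hb]
    · have hpos : 0 < (t + 1) * #(G.cliqueFinset (t + 1)) :=
        Nat.mul_pos (Nat.succ_pos t) (Nat.pos_of_ne_zero hb)
      have key : ((t + 1) * #(G.cliqueFinset (t + 1)))
            * ((t + 1 + (d + 1)) * (t + 1) * #(G.cliqueFinset (t + 1)))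
          ≤ ((t + 1) * #(G.cliqueFinset (t + 1)))
            * (n * (d + 1 + 1) * #(G.cliqueFinset t)) := by
        calc ((t + 1) * #(G.cliqueFinset (t + 1)))
              * ((t + 1 + (d + 1)) * (t + 1) * #(G.cliqueFinset (t + 1)))
            = (t + 1 + (d + 1)) * ((t + 1) * #(G.cliqueFinset (t + 1))) ^ 2 := by ring
          _ ≤ (t + 1 + (d + 1)) * (#(G.cliqueFinset t)
                * (t * (t + 2) * #(G.cliqueFinset (t + 2)) + n * #(G.cliqueFinset (t + 1)))) :=
              Nat.mul_le_mul_left _ hMM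
          _ = t * #(G.cliqueFinset t) * ((t + 1 + (d + 1)) * (t + 2) * #(G.cliqueFinset (t + 2)))
                + (t + 1 + (d + 1)) * #(G.cliqueFinset t)
                  * (n * #(G.cliqueFinset (t + 1))) := by ring
          _ ≤ t * #(G.cliqueFinset t) * (n * (d + 1) * #(G.cliqueFinset (t + 1)))
                + (t + 1 + (d + 1)) * #(G.cliqueFinset t)
                  * (n * #(G.cliqueFinset (t + 1))) :=
              Nat.add_le_add_right (Nat.mul_le_mul_left _ ih') _
          _ = ((t + 1) * #(G.cliqueFinset (t + 1)))
                * (n * (d + 1 + 1) * #(G.cliqueFinset t)) := by ring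
      exact Nat.le_of_mul_le_mul_left key hpos

lemma cascade {r t : ℕ} (hfree : G.CliqueFree (r + 1)) (h1 : 1 ≤ t) (h2 : t + 1 ≤ r) :
    r * (t + 1) * #(G.cliqueFinset (t + 1)) ≤ n * (r - t) * #(G.cliqueFinset t) := by
  obtain ⟨d, hd⟩ : ∃ d, t + 1 + d = r := ⟨r - (t + 1), by omega⟩
  have hfree' : G.CliqueFree (t + 1 + d + 1) := by rw [hd]; exact hfree
  have := cascade_aux G d t hfree'
  rw [hd] at this
  rwa [show r - t = d + 1 by omega]

lemma chain {r : ℕ} (hfree : G.CliqueFree (r + 1)) :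
    ∀ t : ℕ, 1 ≤ t → t ≤ r →
      r ^ t * t.factorial * #(G.cliqueFinset t) ≤ n ^ t * r.descFactorial t := by
  intro t
  induction t with
  | zero => omega
  | succ u ihu =>
    intro _ h2
    rcases Nat.eq_zero_or_pos u with hu | hu
    · subst hu
      rw [card_cliqueFinset_one]
      simp [Nat.descFactorial]
      ring_nf
      omega
    · have ihu' := ihu hu (by omega)
      have hca := cascade G hfree hu (by omega)
      calc r ^ (u + 1) * (u + 1).factorial * #(G.cliqueFinset (u + 1))
          = (r ^ u * u.factorial) * (r * (u + 1) * #(G.cliqueFinset (u + 1))) := by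
            rw [pow_succ, Nat.factorial_succ]; ring
        _ ≤ (r ^ u * u.factorial) * (n * (r - u) * #(G.cliqueFinset u)) :=
            Nat.mul_le_mul_left _ hca
        _ = (n * (r - u)) * (r ^ u * u.factorial * #(G.cliqueFinset u)) := by ring
        _ ≤ (n * (r - u)) * (n ^ u * r.descFactorial u) :=
            Nat.mul_le_mul_left _ ihu'
        _ = n ^ (u + 1) * ((r - u) * r.descFactorial u) := by rw [pow_succ]; ring
        _ = n ^ (u + 1) * r.descFactorial (u + 1) := by rw [Nat.descFactorial_succ]

end ErdosCliqueAux


/-- Erdős's bound: a K_{r+1}-free graph on n vertices has at most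
(n/r)^t·C(r,t) t-cliques. -/
theorem stmt_8 (n r t : ℕ) (G : SimpleGraph (Fin n)) [DecidableRel G.Adj]
    (hfree : G.CliqueFree (r + 1)) (ht : 2 ≤ t) (htr : t ≤ r) :
    ((G.cliqueFinset t).card : ℝ) ≤ ((n : ℝ) / r) ^ t * (r.choose t : ℝ) := by
  have hch := ErdosCliqueAux.chain G hfree t (by omega) htr
  rw [Nat.descFactorial_eq_factorial_mul_choose] at hch
  have h2 : r ^ t * #(G.cliqueFinset t) ≤ n ^ t * r.choose t := by
    have h3 : t.factorial * (r ^ t * #(G.cliqueFinset t))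
        ≤ t.factorial * (n ^ t * r.choose t) := by
      calc t.factorial * (r ^ t * #(G.cliqueFinset t))
          = r ^ t * t.factorial * #(G.cliqueFinset t) := by ring
        _ ≤ n ^ t * (t.factorial * r.choose t) := hch
        _ = t.factorial * (n ^ t * r.choose t) := by ring
    exact Nat.le_of_mul_le_mul_left h3 t.factorial_pos
  have hr0 : (0 : ℝ) < (r : ℝ) := by
    have : 0 < r := by omega
    exact_mod_cast this
  rw [div_pow, div_mul_eq_mul_div, le_div_iff₀ (by positivity)]
  calc ((G.cliqueFinset t).card : ℝ) * (r : ℝ) ^ t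
      = ((r ^ t * #(G.cliqueFinset t) : ℕ) : ℝ) := by push_cast; ring
    _ ≤ ((n ^ t * r.choose t : ℕ) : ℝ) := by exact_mod_cast h2
    _ = (n : ℝ) ^ t * (r.choose t : ℝ) := by push_cast; ring
end

section
/- Let r ≥ 2 and let T_r(n) denote the Turán graph (complete balanced r-partite graph on n vertices). If r divides n, then the number of t-cliques of T_r(n) equals (n/r)^t · C(r,t) for 2 ≤ t ≤ r; in particular the Erdős bound |C_t(G)| ≤ (n/r)^t·C(r,t) for K_{r+1}-free graphs is attained by T_r(n). -/
open SimpleGraph Finset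

/-- When r ∣ n, the Turán graph T_r(n) has exactly (n/r)^t·C(r,t) t-cliques,
attaining Erdős's bound for K_{r+1}-free graphs. -/
theorem stmt_15 (n r t : ℕ) (hr : 2 ≤ r) (hdvd : r ∣ n) (ht : 2 ≤ t) (htr : t ≤ r) :
    ((turanGraph n r).cliqueSet t).ncard = (n / r) ^ t * r.choose t := by
  classical
  rw [← SimpleGraph.coe_cliqueFinset, Set.ncard_coe_finset]
  set m := n / r with hm
  have hr0 : 0 < r := by omega
  have hmn : m * r = n := Nat.div_mul_cancel hdvd
  have hlt : ∀ (j : Fin r) (q : Fin m), (q : ℕ) * r + (j : ℕ) < n := by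
    intro j q
    have hj : (j : ℕ) < r := j.isLt
    have hq : (q : ℕ) + 1 ≤ m := q.isLt
    calc (q : ℕ) * r + (j : ℕ) < (q : ℕ) * r + r := by omega
    _ = ((q : ℕ) + 1) * r := by ring
    _ ≤ m * r := Nat.mul_le_mul_right r hq
    _ = n := hmn
  set toV : Fin r → Fin m → Fin n := fun j q => ⟨(q : ℕ) * r + (j : ℕ), hlt j q⟩
    with htoV
  have hres : ∀ j q, ((toV j q : ℕ)) % r = (j : ℕ) := by
    intro j q
    show ((q : ℕ) * r + (j : ℕ)) % r = (j : ℕ)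
    rw [add_comm, Nat.add_mul_mod_self_right, Nat.mod_eq_of_lt j.isLt]
  have hquot : ∀ j q, ((toV j q : ℕ)) / r = (q : ℕ) := by
    intro j q
    show ((q : ℕ) * r + (j : ℕ)) / r = (q : ℕ)
    rw [add_comm, Nat.add_mul_div_right _ _ hr0, Nat.div_eq_of_lt j.isLt, zero_add]
  set resF : Fin n → Fin r := fun v => ⟨(v : ℕ) % r, Nat.mod_lt _ hr0⟩ with hresF
  -- adjacency characterization
  have hadj : ∀ v w : Fin n, (turanGraph n r).Adj v w ↔ (v : ℕ) % r ≠ (w : ℕ) % r :=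
    fun v w => Iff.rfl
  -- the target finset
  set T : Finset ((A : Finset (Fin r)) × (∀ a ∈ A, Fin m)) :=
    (Finset.powersetCard t (Finset.univ : Finset (Fin r))).sigma
      (fun A => A.pi fun _ => (Finset.univ : Finset (Fin m))) with hT
  have hcardT : T.card = m ^ t * r.choose t := by
    rw [hT, Finset.card_sigma]
    rw [Finset.sum_congr rfl (fun A hA => ?_)]
    · rw [Finset.sum_const, Finset.card_powersetCard, Finset.card_univ, Fintype.card_fin,
        smul_eq_mul, mul_comm]
    · rw [Finset.card_pi]
      rw [Finset.mem_powersetCard] at hA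
      simp [hA.2]
  rw [← hcardT]
  -- the bijection
  refine (Finset.card_bij (fun p _ => p.1.attach.image (fun a => toV a.1 (p.2 a.1 a.2)))
    ?_ ?_ ?_).symm
  · -- maps to cliques
    rintro ⟨A, f⟩ hp
    rw [hT, Finset.mem_sigma, Finset.mem_powersetCard] at hp
    rw [SimpleGraph.mem_cliqueFinset_iff, SimpleGraph.isNClique_iff]
    constructor
    · intro x hx y hy hxy
      simp only [Finset.coe_image, Set.mem_image, Finset.mem_coe, Finset.mem_attach] at hx hy
      obtain ⟨a, -, rfl⟩ := hx
      obtain ⟨b, -, rfl⟩ := hy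
      rw [hadj, hres, hres]
      intro hab
      exact hxy (by rw [Subtype.ext (Fin.val_injective hab : a.1 = b.1)])
    · rw [Finset.card_image_of_injective _ ?_, Finset.card_attach, hp.1.2]
      intro a b hab
      have h1 : (a.1 : ℕ) = (b.1 : ℕ) := by
        have := congrArg (fun v : Fin n => (v : ℕ) % r) hab
        simpa [hres] using this
      exact Subtype.ext (Fin.val_injective h1)
  · -- injective
    rintro ⟨A₁, f₁⟩ hp₁ ⟨A₂, f₂⟩ hp₂ heq
    have hAim : ∀ (A : Finset (Fin r)) (f : ∀ a ∈ A, Fin m),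
        (A.attach.image (fun a => toV a.1 (f a.1 a.2))).image resF = A := by
      intro A f
      rw [Finset.image_image]
      have : (resF ∘ fun a : {x // x ∈ A} => toV a.1 (f a.1 a.2)) = fun a => a.1 := by
        funext a
        exact Fin.val_injective (hres a.1 (f a.1 a.2))
      rw [this]
      exact Finset.attach_image_val
    have hA : A₁ = A₂ := by
      have := congrArg (fun s => s.image resF) heq
      simpa [hAim] using this
    subst hA
    replace heq : A₁.attach.image (fun a => toV a.1 (f₁ a.1 a.2)) =
        A₁.attach.image (fun a => toV a.1 (f₂ a.1 a.2)) := heq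
    have hf : f₁ = f₂ := by
      funext a ha
      have hx : toV a (f₁ a ha) ∈ A₁.attach.image (fun b => toV b.1 (f₂ b.1 b.2)) := by
        rw [← heq]
        exact Finset.mem_image.2 ⟨⟨a, ha⟩, Finset.mem_attach _ _, rfl⟩
      obtain ⟨b, -, hb⟩ := Finset.mem_image.1 hx
      have hab : (b.1 : Fin r) = a := by
        have hval := congrArg (fun v : Fin n => (v : ℕ) % r) hb
        simp only [hres] at hval
        exact Fin.val_injective hval
      have hq : (f₂ b.1 b.2 : ℕ) = (f₁ a ha : ℕ) := by
        have := congrArg (fun v : Fin n => (v : ℕ) / r) hb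
        simpa [hquot] using this
      have : f₂ a ha = f₁ a ha := by
        obtain ⟨b, hb2⟩ := b
        subst hab
        exact Fin.val_injective hq
      exact this.symm
    rw [hf]
  · -- surjective
    intro s hs
    rw [SimpleGraph.mem_cliqueFinset_iff, SimpleGraph.isNClique_iff] at hs
    obtain ⟨hclique, hcard⟩ := hs
    have huniq : ∀ x ∈ s, ∀ y ∈ s, resF x = resF y → x = y := by
      intro x hx y hy hxy
      by_contra hne
      exact (hadj x y).1 (hclique hx hy hne) (congrArg Fin.val hxy)
    set A : Finset (Fin r) := s.image resF with hA
    have hEU : ∀ a ∈ A, ∃! x, x ∈ s ∧ resF x = a := by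
      intro a ha
      obtain ⟨x, hx, hxa⟩ := Finset.mem_image.1 ha
      exact ⟨x, ⟨hx, hxa⟩, fun y hy => huniq y hy.1 x hx (hy.2.trans hxa.symm)⟩
    have hdivlt : ∀ x : Fin n, (x : ℕ) / r < m := by
      intro x
      rw [Nat.div_lt_iff_lt_mul hr0, hmn]
      exact x.isLt
    set f : ∀ a ∈ A, Fin m := fun a ha =>
      ⟨((Finset.choose (fun x => resF x = a) s (hEU a ha) : Fin n) : ℕ) / r,
        hdivlt _⟩ with hf
    have hmemT : (⟨A, f⟩ : (A : Finset (Fin r)) × (∀ a ∈ A, Fin m)) ∈ T := by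
      rw [hT, Finset.mem_sigma, Finset.mem_powersetCard]
      refine ⟨⟨Finset.subset_univ _, ?_⟩, ?_⟩
      · show A.card = t
        rw [hA, Finset.card_image_of_injOn
          (fun x hx y hy hxy => huniq x (by simpa using hx) y (by simpa using hy) hxy), hcard]
      · simp [Finset.mem_pi]
    refine ⟨⟨A, f⟩, hmemT, ?_⟩
    -- show image = s
    have hsub : s ⊆ A.attach.image (fun a => toV a.1 (f a.1 a.2)) := by
      intro x hx
      have haA : resF x ∈ A := Finset.mem_image_of_mem _ hx
      refine Finset.mem_image.2 ⟨⟨resF x, haA⟩, Finset.mem_attach _ _, ?_⟩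
      have hc : Finset.choose (fun y => resF y = resF x) s (hEU _ haA) = x := by
        have h1 := Finset.choose_mem (fun y => resF y = resF x) s (hEU _ haA)
        have h2 := Finset.choose_property (fun y => resF y = resF x) s (hEU _ haA)
        exact huniq _ h1 x hx h2
      apply Fin.val_injective
      show (f (resF x) haA : ℕ) * r + ((resF x : Fin r) : ℕ) = (x : ℕ)
      have : (f (resF x) haA : ℕ) = (x : ℕ) / r := by
        simp only [hf, hc]
      rw [this]
      show (x : ℕ) / r * r + (x : ℕ) % r = (x : ℕ)
      exact Nat.div_add_mod' _ _
    have hle : (A.attach.image (fun a => toV a.1 (f a.1 a.2))).card ≤ s.card := by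
      calc (A.attach.image (fun a => toV a.1 (f a.1 a.2))).card ≤ A.attach.card :=
        Finset.card_image_le
      _ = A.card := Finset.card_attach
      _ ≤ s.card := Finset.card_image_le
    show A.attach.image (fun a => toV a.1 (f a.1 a.2)) = s
    exact (Finset.eq_of_subset_of_card_le hsub hle).symm
end
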